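/- (Pointwise version of Lemma 3's multiplicity splitting) For any nonnegative integers v, n, k with k ≥ n, one has min{v, n} ≤ (k/(k+1))·min{v·1_{v≤k}, n} + (n/(k+1))·v, where 1_{v≤k} is 1 if v ≤ k and 0 otherwise. -/

import Mathlib

/-! Clearing the denominator `k + 1` reduces the claim to an inequality of natural numbers.
If `v ≤ k`, the indicator is `1` and it remains to see `min v n ≤ n v`, which holds since
`min v n ≤ n` and `v ≥ 1` unless `v = 0`. If `v > k`, the first term vanishes and
`(k + 1) min v n ≤ v n` because `k + 1 ≤ v` and `min v n ≤ n`. -/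

theorem Nat.min_le_mul (a b : ℕ) : min a b ≤ a * b := by
  rcases Nat.eq_zero_or_pos a with rfl | ha
  · simp
  · exact min_le_mul_of_one_le_left ha

theorem Nat.succ_mul_min_le_mul_of_lt {k v : ℕ} (hv : k < v) (n : ℕ) :
    (k + 1) * min v n ≤ v * n :=
  Nat.mul_le_mul hv (min_le_right v n)

theorem multiplicity_splitting_nat (v n k : ℕ) :
    (k + 1) * min v n ≤ k * min (if v ≤ k then v else 0) n + n * v := by
  split_ifs with hv
  · have h : min v n ≤ n * v := min_comm n v ▸ Nat.min_le_mul n v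
    linarith
  · simpa [mul_comm n v] using Nat.succ_mul_min_le_mul_of_lt (not_le.mp hv) n

theorem multiplicity_splitting_general (v n k : ℕ) :
    (min v n : ℚ) ≤
      (k : ℚ) / (k + 1) * (min (if v ≤ k then v else 0) n : ℕ) +
        (n : ℚ) / (k + 1) * v := by
  rw [div_mul_eq_mul_div, div_mul_eq_mul_div, ← add_div, le_div_iff₀ (by positivity), mul_comm]
  exact_mod_cast multiplicity_splitting_nat v n k

/-- Pointwise multiplicity splitting of Lemma 3: for nonnegative integers `v, n, k` with
`k ≥ n ≥ 1`, one has `min v n ≤ (k/(k+1))·min (v·1_{v≤k}) n + (n/(k+1))·v` over `ℚ`. -/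
theorem multiplicity_splitting (v n k : ℕ) (hn : 1 ≤ n) (hk : n ≤ k) :
    (min v n : ℚ) ≤
      (k : ℚ) / (k + 1) * (min (if v ≤ k then v else 0) n : ℕ) +
        (n : ℚ) / (k + 1) * v :=
  multiplicity_splitting_general v n k
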